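/- arXiv:1512.02983 — 2 statements merged into one kernel-verified Lean document; each statement's English description precedes it below -/
import Mathlib

section
/- Let M be an s×s real symmetric matrix, U an s×t real matrix, W a t×t real matrix such that range(Uᵀ) ⊆ range(Wᵀ). Then for every real λ, the matrix [[M, 0],[0, 0]] + λ·[[U·Uᵀ, U·Wᵀ],[W·Uᵀ, W·Wᵀ]] is congruent, via an invertible matrix independent of λ, to [[M, 0],[0, λ·W·Wᵀ]]. In particular, for all λ ≤ 0 the number of strictly positive eigenvalues of [[M,0],[0,0]] + λ[[UUᵀ, UWᵀ],[WUᵀ, WWᵀ]] equals the number of strictly positive eigenvalues of M plus that of λWWᵀ. -/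
/-!
Since `range Uᵀ ⊆ range Wᵀ` we may write `U = Yᵀ W`, and then the bordered matrix is
`Sᵀ diag(M, λ W Wᵀ) S` for the unipotent `S = [[1, 0], [Y, 1]]`, which does not involve `λ`.
The count of positive eigenvalues is invariant under congruence (Sylvester's law of inertia)
and additive on block-diagonal matrices. Both follow from one characterisation: if `A` is
positive definite on `P` and negative semidefinite on `N` with `dim P + dim N = n`, then `dim P`
is the number of positive eigenvalues, because `P ∩ N' = 0` forces `dim P + dim N' ≤ n` for any
two such pairs `(P, N)`, `(P', N')`, and an eigenbasis provides one pair. Such pairs pull back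
along congruences and are explicit for diagonal matrices.
-/

open Matrix

/-- The number of strictly positive eigenvalues (with multiplicity) of a real symmetric
(Hermitian) matrix; `0` for non-Hermitian matrices. -/
noncomputable def posIdx {n : Type*} [Fintype n] [DecidableEq n] (A : Matrix n n ℝ) : ℕ :=
  if h : A.IsHermitian then Fintype.card {i // 0 < h.eigenvalues i} else 0

open Module

namespace LinearMap

theorem mem_ker_funLeft_subtypeVal {R M n : Type*} [Semiring R] [AddCommMonoid M] [Module R M]
    {p : n → Prop} {x : n → M} :
    x ∈ ker (funLeft R M (Subtype.val : {i // p i} → n)) ↔ ∀ i, p i → x i = 0 := by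
  simp [funext_iff]

theorem finrank_ker_funLeft_add_card {K m n : Type*} [Field K] [Fintype m] [Fintype n]
    {f : m → n} (hf : Function.Injective f) :
    finrank K (ker (funLeft K K f)) + Fintype.card m = Fintype.card n := by
  have := finrank_range_add_finrank_ker (funLeft K K f)
  rw [range_eq_top.2 (funLeft_surjective_of_injective K K f hf), finrank_top,
    finrank_fintype_fun_eq_card, finrank_fintype_fun_eq_card] at this
  omega

end LinearMap

namespace Matrix

theorem dotProduct_transpose_mul_mul_mulVec {R n : Type*} [CommSemiring R] [Fintype n]
    (A S : Matrix n n R) (x : n → R) :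
    x ⬝ᵥ (Sᵀ * A * S) *ᵥ x = (S *ᵥ x) ⬝ᵥ A *ᵥ (S *ᵥ x) := by
  rw [← mulVec_mulVec, ← mulVec_mulVec, dotProduct_mulVec, vecMul_transpose]

theorem dotProduct_diagonal_mulVec {R n : Type*} [CommSemiring R] [Fintype n] [DecidableEq n]
    (d x : n → R) : x ⬝ᵥ diagonal d *ᵥ x = ∑ i, d i * x i ^ 2 := by
  simp only [dotProduct, mulVec_diagonal]
  exact Finset.sum_congr rfl fun i _ => by ring

theorem finrank_comap_mulVecLin {K n : Type*} [Field K] [Fintype n] [DecidableEq n]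
    {S : Matrix n n K} (hS : IsUnit S) (P : Submodule K (n → K)) :
    finrank K (P.comap S.mulVecLin) = finrank K P := by
  let e := LinearEquiv.ofBijective S.mulVecLin
    ⟨mulVec_injective_iff_isUnit.2 hS, mulVec_surjective_iff_isUnit.2 hS⟩
  exact Submodule.comap_equiv_eq_map_symm e P ▸ e.symm.finrank_map_eq P

section Inertia

variable {K n : Type*} [Field K] [LinearOrder K] [Fintype n]

def PosOn (A : Matrix n n K) (P : Submodule K (n → K)) : Prop :=
  ∀ x ∈ P, x ≠ 0 → 0 < x ⬝ᵥ A *ᵥ x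

def NonposOn (A : Matrix n n K) (N : Submodule K (n → K)) : Prop :=
  ∀ x ∈ N, x ⬝ᵥ A *ᵥ x ≤ 0

def HasPosIndex (A : Matrix n n K) (k : ℕ) : Prop :=
  ∃ P N : Submodule K (n → K), PosOn A P ∧ NonposOn A N ∧
    finrank K P = k ∧ finrank K P + finrank K N = Fintype.card n

theorem PosOn.finrank_add_finrank_le_card {A : Matrix n n K} {P N : Submodule K (n → K)}
    (hP : PosOn A P) (hN : NonposOn A N) : finrank K P + finrank K N ≤ Fintype.card n := by
  have hPN : P ⊓ N = ⊥ := (Submodule.eq_bot_iff _).2 fun x hx => by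
    by_contra hx0
    exact (hN x hx.2).not_gt (hP x hx.1 hx0)
  calc finrank K P + finrank K N = finrank K ↥(P ⊔ N) := by
        rw [← Submodule.finrank_sup_add_finrank_inf_eq, hPN, finrank_bot, add_zero]
    _ ≤ finrank K (n → K) := Submodule.finrank_le _
    _ = Fintype.card n := finrank_fintype_fun_eq_card K

theorem HasPosIndex.unique {A : Matrix n n K} {k l : ℕ} (hk : HasPosIndex A k)
    (hl : HasPosIndex A l) : k = l := by
  obtain ⟨P, N, hP, hN, rfl, hPN⟩ := hk
  obtain ⟨P', N', hP', hN', rfl, hPN'⟩ := hl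
  have := hP.finrank_add_finrank_le_card hN'
  have := hP'.finrank_add_finrank_le_card hN
  omega

variable [DecidableEq n]

theorem HasPosIndex.transpose_mul_mul {A S : Matrix n n K} {k : ℕ} (h : HasPosIndex A k)
    (hS : IsUnit S) : HasPosIndex (Sᵀ * A * S) k := by
  obtain ⟨P, N, hP, hN, rfl, hPN⟩ := h
  refine ⟨P.comap S.mulVecLin, N.comap S.mulVecLin, fun x hx hx0 => ?_, fun x hx => ?_,
    finrank_comap_mulVecLin hS P, by rwa [finrank_comap_mulVecLin hS, finrank_comap_mulVecLin hS]⟩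
  · rw [dotProduct_transpose_mul_mul_mulVec]
    exact hP _ hx fun h0 => hx0 (mulVec_injective_iff_isUnit.2 hS (h0.trans (mulVec_zero S).symm))
  · rw [dotProduct_transpose_mul_mul_mulVec]
    exact hN _ hx

theorem hasPosIndex_diagonal [IsStrictOrderedRing K] (d : n → K) :
    HasPosIndex (diagonal d) (Fintype.card {i // 0 < d i}) := by
  have hcard_pos := LinearMap.finrank_ker_funLeft_add_card (K := K)
    (Subtype.val_injective (p := fun i => 0 < d i))
  have hcard_nonpos := LinearMap.finrank_ker_funLeft_add_card (K := K)
    (Subtype.val_injective (p := fun i => ¬ 0 < d i))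
  rw [Fintype.card_subtype_compl] at hcard_nonpos
  have := Fintype.card_subtype_le (fun i => 0 < d i)
  refine ⟨LinearMap.ker (LinearMap.funLeft K K (Subtype.val : {i // ¬ 0 < d i} → n)),
    LinearMap.ker (LinearMap.funLeft K K (Subtype.val : {i // 0 < d i} → n)),
    fun x hx hx0 => ?_, fun x hx => ?_, by omega, by omega⟩
  · rw [LinearMap.mem_ker_funLeft_subtypeVal] at hx
    obtain ⟨i, hi⟩ := Function.ne_iff.1 hx0
    have hdi : 0 < d i := by
      by_contra h
      exact hi (hx i h)
    rw [dotProduct_diagonal_mulVec]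
    refine Finset.sum_pos' (fun j _ => ?_) ⟨i, Finset.mem_univ i, mul_pos hdi (pow_two_pos_of_ne_zero hi)⟩
    by_cases hj : 0 < d j
    · positivity
    · simp [hx j hj]
  · rw [LinearMap.mem_ker_funLeft_subtypeVal] at hx
    rw [dotProduct_diagonal_mulVec]
    refine Finset.sum_nonpos fun j _ => ?_
    by_cases hj : 0 < d j
    · simp [hx j hj]
    · exact mul_nonpos_of_nonpos_of_nonneg (not_lt.1 hj) (sq_nonneg _)

end Inertia

section PosIdx

variable {n : Type*} [Fintype n] [DecidableEq n]

theorem IsHermitian.exists_isUnit_eq_transpose_mul_diagonal_mul {A : Matrix n n ℝ}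
    (hA : A.IsHermitian) :
    ∃ V : Matrix n n ℝ, IsUnit V ∧ A = Vᵀ * diagonal hA.eigenvalues * V := by
  refine ⟨star (hA.eigenvectorUnitary : Matrix n n ℝ), Unitary.isUnit_coe.star, ?_⟩
  conv_lhs => rw [hA.spectral_theorem, Unitary.conjStarAlgAut_apply]
  simp [RCLike.ofReal_real_eq_id, star_eq_conjTranspose, conjTranspose_eq_transpose_of_trivial]

theorem IsHermitian.posIdx_eq_card {A : Matrix n n ℝ} (hA : A.IsHermitian) :
    posIdx A = Fintype.card {i // 0 < hA.eigenvalues i} :=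
  dif_pos hA

theorem IsHermitian.hasPosIndex_posIdx {A : Matrix n n ℝ} (hA : A.IsHermitian) :
    HasPosIndex A (posIdx A) := by
  obtain ⟨V, hV, hAV⟩ := hA.exists_isUnit_eq_transpose_mul_diagonal_mul
  have h := (hasPosIndex_diagonal hA.eigenvalues).transpose_mul_mul hV
  rwa [← hAV, ← hA.posIdx_eq_card] at h

theorem IsHermitian.posIdx_eq {A : Matrix n n ℝ} (hA : A.IsHermitian) {k : ℕ}
    (h : HasPosIndex A k) : posIdx A = k :=
  hA.hasPosIndex_posIdx.unique h

theorem posIdx_transpose_mul_mul {A S : Matrix n n ℝ} (hA : A.IsHermitian) (hS : IsUnit S) :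
    posIdx (Sᵀ * A * S) = posIdx A := by
  have hSAS : (Sᵀ * A * S).IsHermitian := by
    simpa only [conjTranspose_eq_transpose_of_trivial] using isHermitian_conjTranspose_mul_mul S hA
  exact hSAS.posIdx_eq (hA.hasPosIndex_posIdx.transpose_mul_mul hS)

theorem posIdx_fromBlocks_zero {m : Type*} [Fintype m] [DecidableEq m] {A : Matrix n n ℝ}
    {B : Matrix m m ℝ} (hA : A.IsHermitian) (hB : B.IsHermitian) :
    posIdx (fromBlocks A 0 0 B) = posIdx A + posIdx B := by
  obtain ⟨V, hV, hAV⟩ := hA.exists_isUnit_eq_transpose_mul_diagonal_mul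
  obtain ⟨V', hV', hBV'⟩ := hB.exists_isUnit_eq_transpose_mul_diagonal_mul
  have hAB : fromBlocks A 0 0 B = (fromBlocks V 0 0 V')ᵀ *
      diagonal (Sum.elim hA.eigenvalues hB.eigenvalues) * fromBlocks V 0 0 V' := by
    conv_lhs => rw [hAV, hBV']
    simp [← fromBlocks_diagonal, fromBlocks_transpose, fromBlocks_multiply]
  have h := (hasPosIndex_diagonal (Sum.elim hA.eigenvalues hB.eigenvalues)).transpose_mul_mul
    (isUnit_fromBlocks_zero₂₁ (B := 0) |>.2 ⟨hV, hV'⟩)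
  rw [← hAB, Fintype.card_congr Equiv.subtypeSum, Fintype.card_sum] at h
  rw [(hA.fromBlocks (by simp) hB).posIdx_eq h, hA.posIdx_eq_card, hB.posIdx_eq_card]
  rfl

end PosIdx

theorem exists_mul_eq_of_range_mulVecLin_le {R m k l : Type*} [CommSemiring R]
    [Fintype k] [DecidableEq k] [Fintype l] {A : Matrix m k R} {B : Matrix m l R}
    (h : LinearMap.range A.mulVecLin ≤ LinearMap.range B.mulVecLin) :
    ∃ Y : Matrix l k R, B * Y = A := by
  choose y hy using fun j => h (LinearMap.mem_range_self A.mulVecLin (Pi.single j 1))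
  refine ⟨(of y)ᵀ, ext fun i j => ?_⟩
  simpa [mul_apply, mulVec, dotProduct, Pi.single_apply] using congrFun (hy j) i

theorem fromBlocks_one_zero_transpose_mul_fromBlocks_mul {R m n : Type*} [CommRing R]
    [Fintype m] [Fintype n] [DecidableEq m] [DecidableEq n]
    (M : Matrix m m R) (N : Matrix n n R) (Y : Matrix n m R) :
    (fromBlocks 1 0 Y 1)ᵀ * fromBlocks M 0 0 N * fromBlocks 1 0 Y 1 =
      fromBlocks (M + Yᵀ * N * Y) (Yᵀ * N) (N * Y) N := by
  simp [fromBlocks_transpose, fromBlocks_multiply, Matrix.mul_assoc]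

end Matrix

/-- If `range Uᵀ ⊆ range Wᵀ`, then `[[M,0],[0,0]] + λ [[U Uᵀ, U Wᵀ],[W Uᵀ, W Wᵀ]]` is
congruent, via an invertible matrix independent of `λ`, to `diag(M, λ W Wᵀ)`; consequently
for `λ ≤ 0` its number of strictly positive eigenvalues is `μ₊(M) + μ₊(λ W Wᵀ)`. -/
theorem bordered_congruence_of_range_le {s t : ℕ}
    (M : Matrix (Fin s) (Fin s) ℝ) (hM : M.IsSymm)
    (U : Matrix (Fin s) (Fin t) ℝ) (W : Matrix (Fin t) (Fin t) ℝ)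
    (hUW : LinearMap.range Uᵀ.mulVecLin ≤ LinearMap.range Wᵀ.mulVecLin) :
    (∃ S : Matrix (Fin s ⊕ Fin t) (Fin s ⊕ Fin t) ℝ, IsUnit S ∧
      ∀ lam : ℝ,
        Matrix.fromBlocks M 0 0 0 +
          lam • Matrix.fromBlocks (U * Uᵀ) (U * Wᵀ) (W * Uᵀ) (W * Wᵀ) =
        Sᵀ * Matrix.fromBlocks M 0 0 (lam • (W * Wᵀ)) * S) ∧
    ∀ lam : ℝ, lam ≤ 0 →
      posIdx (Matrix.fromBlocks M 0 0 0 +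
          lam • Matrix.fromBlocks (U * Uᵀ) (U * Wᵀ) (W * Uᵀ) (W * Wᵀ)) =
        posIdx M + posIdx (lam • (W * Wᵀ)) := by
  obtain ⟨Y, hY⟩ := exists_mul_eq_of_range_mulVecLin_le hUW
  have hU : U = Yᵀ * W := by rw [← transpose_transpose U, ← hY, transpose_mul, transpose_transpose]
  have hS : IsUnit (fromBlocks 1 0 Y 1) := isUnit_fromBlocks_zero₁₂.2 ⟨isUnit_one, isUnit_one⟩
  have hcongr : ∀ lam : ℝ, fromBlocks M 0 0 0 +
      lam • fromBlocks (U * Uᵀ) (U * Wᵀ) (W * Uᵀ) (W * Wᵀ) =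
      (fromBlocks 1 0 Y 1)ᵀ * fromBlocks M 0 0 (lam • (W * Wᵀ)) * fromBlocks 1 0 Y 1 := by
    intro lam
    rw [fromBlocks_one_zero_transpose_mul_fromBlocks_mul, hU]
    simp [fromBlocks_smul, fromBlocks_add, transpose_mul, Matrix.mul_assoc]
  refine ⟨⟨_, hS, hcongr⟩, fun lam _ => ?_⟩
  have hM' : M.IsHermitian := isHermitian_iff_isSymm.2 hM
  have hWW : (lam • (W * Wᵀ)).IsHermitian :=
    isHermitian_iff_isSymm.2 ((isSymm_mul_transpose_self W).smul lam)
  rw [hcongr, posIdx_transpose_mul_mul (hM'.fromBlocks (by simp) hWW) hS,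
    posIdx_fromBlocks_zero hM' hWW]
end

section
/- Let Q_{λ,δ} = [[E₁₁ + δG₁₁, E₁₂ + δG₁₂],[E₂₁ + δG₂₁, E₂₂ + λF₂₂ + δG₂₂]] be a real symmetric block matrix with G₁₁ ≻ 0 and F₂₂ ≻ 0. Then: (a) there exists ε < 0 such that for δ ∈ [ε, 0), E₁₁ + δG₁₁ is invertible with μ₊(E₁₁ + δG₁₁) = μ₊(E₁₁); and (b) for each such δ there exists λ_δ < 0 such that for λ ≤ λ_δ the Schur complement S_{λ,δ} = E₂₂ + λF₂₂ + δG₂₂ − (E₁₂+δG₁₂)ᵀ(E₁₁+δG₁₁)⁻¹(E₁₂+δG₁₂) is negative definite, whence μ₊(Q_{λ,δ}) = μ₊(E₁₁). -/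
/-!
`posIdx A` is the positive index `sigPos` of the quadratic form `x ↦ x ⬝ᵥ A *ᵥ x`: in the
coordinates of an orthonormal eigenbasis the form is `∑ λᵢ yᵢ²`. The change of variables
`(x, y) ↦ (x - A⁻¹ B y, y)` turns the form of `fromBlocks A B Bᵀ D` into the orthogonal sum of the
forms of `A` and of the Schur complement `D - Bᵀ A⁻¹ B` (Haynsworth), and a negative semidefinite
summand does not change `sigPos`.

For `δ < 0` small, the form of `E₁₁ + δ G₁₁` stays positive definite on the span of the
eigenvectors of `E₁₁` with positive eigenvalue, since those eigenvalues are at least some `c > 0`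
while `δ G₁₁` costs at most `|δ| C ‖x‖²`; on the span of the other eigenvectors it is negative
definite because `G₁₁ ≻ 0`. Two complementary subspaces of this kind determine `sigPos` and leave
no room for a radical, so `E₁₁ + δ G₁₁` is invertible. Finally `λ F₂₂` with `λ → -∞` dominates the
rest of the Schur complement.
-/

open Matrix

open Module QuadraticMap

lemma Finite.exists_pos_forall_le {ι : Type*} [Finite ι] (f : ι → ℝ) : ∃ C > 0, ∀ i, f i ≤ C :=
  let ⟨C, hC⟩ := Finite.exists_le f
  ⟨max C 1, by positivity, fun i => (hC i).trans (le_max_left _ _)⟩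

lemma Finite.exists_pos_forall_le_of_pos {ι : Type*} [Finite ι] (f : ι → ℝ) :
    ∃ c > 0, ∀ i, 0 < f i → c ≤ f i :=
  let ⟨C, hC, hCf⟩ := Finite.exists_pos_forall_le fun i => (f i)⁻¹
  ⟨C⁻¹, inv_pos.2 hC, fun i hi => inv_le_of_inv_le₀ hi (hCf i)⟩

section WeightedSumSquares

variable {ι : Type*} [Fintype ι] {s : Set ι} {w : ι → ℝ} {c : ℝ} {z : ι → ℝ}

theorem mul_dotProduct_self_le_weightedSumSquares (hw : ∀ i ∈ s, c ≤ w i)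
    (hz : z ∈ Pi.spanSubset ℝ s) : c * (z ⬝ᵥ z) ≤ weightedSumSquares ℝ w z := by
  rw [weightedSumSquares_apply, dotProduct, Finset.mul_sum]
  refine Finset.sum_le_sum fun i _ => ?_
  by_cases hi : i ∈ s
  · exact mul_le_mul_of_nonneg_right (hw i hi) (mul_self_nonneg _)
  · simp [Pi.mem_spanSubset_iff.1 hz i hi]

theorem weightedSumSquares_le_mul_dotProduct_self (hw : ∀ i ∈ s, w i ≤ c)
    (hz : z ∈ Pi.spanSubset ℝ s) : weightedSumSquares ℝ w z ≤ c * (z ⬝ᵥ z) := by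
  rw [weightedSumSquares_apply, dotProduct, Finset.mul_sum]
  refine Finset.sum_le_sum fun i _ => ?_
  by_cases hi : i ∈ s
  · exact mul_le_mul_of_nonneg_right (hw i hi) (mul_self_nonneg _)
  · simp [Pi.mem_spanSubset_iff.1 hz i hi]

end WeightedSumSquares

namespace QuadraticForm

variable {𝕜 M M₁ M₂ : Type*} [Field 𝕜] [LinearOrder 𝕜] [IsStrictOrderedRing 𝕜]

section Complementary

variable [AddCommGroup M] [Module 𝕜 M] [FiniteDimensional 𝕜 M]
  {Q : QuadraticForm 𝕜 M} {P N : Submodule 𝕜 M}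

theorem sigPos_eq_finrank_of_posDef_of_negDef (hP : (Q.restrict P).PosDef)
    (hN : ((-Q).restrict N).PosDef) (hPN : finrank 𝕜 P + finrank 𝕜 N = finrank 𝕜 M) :
    sigPos Q = finrank 𝕜 P := by
  have hQN : ∀ x ∈ N, Q x ≤ 0 := fun x hx => by
    rcases eq_or_ne x 0 with rfl | hx0
    · simp
    · simpa using (hN ⟨x, hx⟩ (by simpa using hx0)).le
  have := le_sigPos_of_posDef Q hP
  have := sigPos_add_finrank_le_of_nonpos hQN
  omega

theorem radical_eq_bot_of_posDef_of_negDef (hP : (Q.restrict P).PosDef)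
    (hN : ((-Q).restrict N).PosDef) (hPN : finrank 𝕜 P + finrank 𝕜 N = finrank 𝕜 M) :
    Q.radical = ⊥ := by
  have := le_sigPos_of_posDef Q hP
  have := le_sigNeg_of_negDef Q hN
  have := sigPos_add_sigNeg_add_radical (Q := Q)
  exact Submodule.finrank_eq_zero.1 (by omega)

end Complementary

variable [AddCommGroup M₁] [Module 𝕜 M₁] [FiniteDimensional 𝕜 M₁]
  [AddCommGroup M₂] [Module 𝕜 M₂] [FiniteDimensional 𝕜 M₂]

theorem sigPos_prod_of_nonpos (Q₁ : QuadraticForm 𝕜 M₁) {Q₂ : QuadraticForm 𝕜 M₂}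
    (hQ₂ : ∀ y, Q₂ y ≤ 0) : sigPos (Q₁.prod Q₂) = sigPos Q₁ := by
  refine le_antisymm ?_ ?_
  · obtain ⟨V, hV, hVpos⟩ := exists_finrank_eq_sigPos_and_posDef (Q₁.prod Q₂)
    have hfst : ∀ v ∈ V, v ≠ 0 → 0 < Q₁ v.1 := fun v hv hv0 => by
      have := hVpos ⟨v, hv⟩ (by simpa using hv0)
      simp only [restrict_apply, prod_apply] at this
      linarith [hQ₂ v.2]
    have hinj : Function.Injective ((LinearMap.fst 𝕜 M₁ M₂).domRestrict V) := by
      refine (injective_iff_map_eq_zero _).2 fun v hv => ?_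
      by_contra hv0
      have := hfst v v.2 (by simpa using hv0)
      simp_all
    rw [← hV, ← LinearMap.finrank_range_of_inj hinj]
    refine le_sigPos_of_posDef Q₁ fun ⟨x, hx⟩ hx0 => ?_
    obtain ⟨v, rfl⟩ := LinearMap.mem_range.1 hx
    exact hfst v v.2 (fun h => hx0 (by simp [h]))
  · obtain ⟨P, hP, hPpos⟩ := exists_finrank_eq_sigPos_and_posDef Q₁
    have hinl := LinearMap.inl_injective (R := 𝕜) (M := M₁) (M₂ := M₂)
    rw [← hP, (P.equivMapOfInjective _ hinl).finrank_eq]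
    refine le_sigPos_of_posDef _ fun ⟨v, hv⟩ hv0 => ?_
    obtain ⟨x, hx, rfl⟩ := Submodule.mem_map.1 hv
    have := hPpos ⟨x, hx⟩ (fun h => hv0 (by simp_all))
    simpa using this

end QuadraticForm

namespace Matrix

variable {m n : Type*} [Fintype m] [DecidableEq m] [Fintype n] [DecidableEq n]

lemma toQuadraticForm'_apply {R : Type*} [CommRing R] (A : Matrix n n R) (x : n → R) :
    A.toQuadraticForm' x = x ⬝ᵥ A *ᵥ x := by
  simp [Matrix.toQuadraticForm', toLinearMap₂'_apply']

namespace IsHermitian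

variable {A : Matrix n n ℝ}

noncomputable def eigenCoords (hA : A.IsHermitian) : (n → ℝ) ≃ₗ[ℝ] (n → ℝ) :=
  UnitaryGroup.toLinearEquiv (star hA.eigenvectorUnitary)

lemma eigenCoords_apply (hA : A.IsHermitian) (x : n → ℝ) :
    hA.eigenCoords x = (hA.eigenvectorUnitary : Matrix n n ℝ)ᵀ *ᵥ x := rfl

lemma dotProduct_eigenCoords (hA : A.IsHermitian) (x y : n → ℝ) :
    hA.eigenCoords x ⬝ᵥ hA.eigenCoords y = x ⬝ᵥ y := by
  have hU := Unitary.coe_mul_star_self hA.eigenvectorUnitary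
  rw [Unitary.coe_star, star_eq_conjTranspose, conjTranspose_eq_transpose_of_trivial] at hU
  rw [eigenCoords_apply, eigenCoords_apply, dotProduct_mulVec, vecMul_transpose, mulVec_mulVec,
    hU, one_mulVec]

lemma dotProduct_mulVec_eq_weightedSumSquares (hA : A.IsHermitian) (x : n → ℝ) :
    x ⬝ᵥ A *ᵥ x = weightedSumSquares ℝ hA.eigenvalues (hA.eigenCoords x) := by
  conv_lhs => rw [hA.spectral_theorem]
  rw [Unitary.conjStarAlgAut_apply, eigenCoords_apply, weightedSumSquares_apply, ← mulVec_mulVec,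
    ← mulVec_mulVec, dotProduct_mulVec, ← mulVec_transpose, star_eq_conjTranspose,
    conjTranspose_eq_transpose_of_trivial]
  simp [dotProduct, mulVec_diagonal, mul_left_comm]

noncomputable def isometryEquivWeightedSumSquares (hA : A.IsHermitian) :
    A.toQuadraticForm'.IsometryEquiv (weightedSumSquares ℝ hA.eigenvalues) where
  __ := hA.eigenCoords
  map_app' x := by
    rw [toQuadraticForm'_apply, hA.dotProduct_mulVec_eq_weightedSumSquares]
    rfl

theorem posIdx_eq_ncard (hA : A.IsHermitian) :
    posIdx A = {i | 0 < hA.eigenvalues i}.ncard := by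
  rw [posIdx, dif_pos hA, ← Nat.card_eq_fintype_card]
  exact Nat.card_coe_set_eq _

theorem posIdx_eq_sigPos (hA : A.IsHermitian) : posIdx A = sigPos A.toQuadraticForm' := by
  rw [hA.posIdx_eq_ncard, QuadraticForm.sigPos_of_equiv_weightedSumSquares
    ⟨hA.isometryEquivWeightedSumSquares⟩]

theorem isUnit_of_radical_eq_bot (hA : A.IsHermitian) (h : A.toQuadraticForm'.radical = ⊥) :
    IsUnit A := by
  refine mulVec_injective_iff_isUnit.1 <| (injective_iff_map_eq_zero A.mulVecLin).2 fun x hx => ?_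
  rw [mulVecLin_apply] at hx
  have hx' : ∀ y, x ⬝ᵥ A *ᵥ y = 0 := fun y => by
    rw [dotProduct_mulVec, ← mulVec_transpose, ← conjTranspose_eq_transpose_of_trivial, hA.eq, hx,
      zero_dotProduct]
  rw [← Submodule.mem_bot ℝ, ← h, mem_radical_iff']
  simp only [toQuadraticForm'_apply, mulVec_add, add_dotProduct, dotProduct_add, hx, hx',
    dotProduct_zero]
  simp

noncomputable def eigenspan (hA : A.IsHermitian) (s : Set n) : Submodule ℝ (n → ℝ) :=
  (Pi.spanSubset ℝ s).map hA.eigenCoords.symm.toLinearMap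

theorem finrank_eigenspan (hA : A.IsHermitian) (s : Set n) :
    finrank ℝ (hA.eigenspan s) = s.ncard := by
  rw [eigenspan, LinearEquiv.finrank_map_eq, Pi.dim_spanSubset]

theorem mem_eigenspan_univ (hA : A.IsHermitian) (x : n → ℝ) : x ∈ hA.eigenspan Set.univ := by
  simp [eigenspan, Pi.mem_spanSubset_iff]

variable {s : Set n} {c : ℝ} {x : n → ℝ}

theorem mul_dotProduct_self_le_of_mem_eigenspan (hA : A.IsHermitian)
    (hc : ∀ i ∈ s, c ≤ hA.eigenvalues i) (hx : x ∈ hA.eigenspan s) :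
    c * (x ⬝ᵥ x) ≤ x ⬝ᵥ A *ᵥ x := by
  rw [eigenspan, Submodule.mem_map_equiv, LinearEquiv.symm_symm] at hx
  rw [hA.dotProduct_mulVec_eq_weightedSumSquares, ← hA.dotProduct_eigenCoords]
  exact mul_dotProduct_self_le_weightedSumSquares hc hx

theorem dotProduct_mulVec_le_of_mem_eigenspan (hA : A.IsHermitian)
    (hc : ∀ i ∈ s, hA.eigenvalues i ≤ c) (hx : x ∈ hA.eigenspan s) :
    x ⬝ᵥ A *ᵥ x ≤ c * (x ⬝ᵥ x) := by
  rw [eigenspan, Submodule.mem_map_equiv, LinearEquiv.symm_symm] at hx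
  rw [hA.dotProduct_mulVec_eq_weightedSumSquares, ← hA.dotProduct_eigenCoords]
  exact weightedSumSquares_le_mul_dotProduct_self hc hx

theorem exists_dotProduct_mulVec_le (hA : A.IsHermitian) :
    ∃ C > 0, ∀ x, x ⬝ᵥ A *ᵥ x ≤ C * (x ⬝ᵥ x) := by
  obtain ⟨C, hC, hCA⟩ := Finite.exists_pos_forall_le hA.eigenvalues
  exact ⟨C, hC, fun x =>
    hA.dotProduct_mulVec_le_of_mem_eigenspan (fun i _ => hCA i) (hA.mem_eigenspan_univ x)⟩

end IsHermitian

theorem PosDef.exists_mul_dotProduct_self_le {A : Matrix n n ℝ} (hA : A.PosDef) :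
    ∃ c > 0, ∀ x, c * (x ⬝ᵥ x) ≤ x ⬝ᵥ A *ᵥ x := by
  obtain ⟨c, hc, hcA⟩ := Finite.exists_pos_forall_le_of_pos hA.1.eigenvalues
  exact ⟨c, hc, fun x => hA.1.mul_dotProduct_self_le_of_mem_eigenspan
    (fun i _ => hcA i (hA.eigenvalues_pos i)) (hA.1.mem_eigenspan_univ x)⟩

theorem IsHermitian.exists_isUnit_and_posIdx_add_smul {A G : Matrix n n ℝ} (hA : A.IsHermitian)
    (hG : G.PosDef) :
    ∃ ε < (0 : ℝ), ∀ δ : ℝ, ε ≤ δ → δ < 0 → IsUnit (A + δ • G) ∧ posIdx (A + δ • G) = posIdx A := by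
  obtain ⟨c, hc, hcA⟩ := Finite.exists_pos_forall_le_of_pos hA.eigenvalues
  obtain ⟨C, hC, hCG⟩ := hG.1.exists_dotProduct_mulVec_le
  refine ⟨-(c / (2 * C)), by simp only [neg_lt_zero]; positivity, fun δ hεδ hδ => ?_⟩
  set s := {i | 0 < hA.eigenvalues i}
  have hq : ∀ x, (A + δ • G).toQuadraticForm' x = x ⬝ᵥ A *ᵥ x + δ * (x ⬝ᵥ G *ᵥ x) := fun x => by
    rw [toQuadraticForm'_apply, add_mulVec, smul_mulVec, dotProduct_add, dotProduct_smul,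
      smul_eq_mul]
  have hP : ((A + δ • G).toQuadraticForm'.restrict (hA.eigenspan s)).PosDef := by
    rintro ⟨x, hx⟩ hx0
    have hAx := hA.mul_dotProduct_self_le_of_mem_eigenspan (fun i hi => hcA i hi) hx
    have hxx : 0 < x ⬝ᵥ x := by
      simpa [star_trivial] using (dotProduct_self_star_pos_iff (v := x)).2 (by simpa using hx0)
    have hδG : -(c / 2) * (x ⬝ᵥ x) ≤ δ * (x ⬝ᵥ G *ᵥ x) := calc
      -(c / 2) * (x ⬝ᵥ x) = -(c / (2 * C)) * (C * (x ⬝ᵥ x)) := by field_simp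
      _ ≤ δ * (C * (x ⬝ᵥ x)) := by gcongr
      _ ≤ δ * (x ⬝ᵥ G *ᵥ x) := mul_le_mul_of_nonpos_left (hCG x) hδ.le
    rw [restrict_apply, hq]
    nlinarith
  have hN : ((-(A + δ • G).toQuadraticForm').restrict (hA.eigenspan sᶜ)).PosDef := by
    rintro ⟨x, hx⟩ hx0
    have hAx := hA.dotProduct_mulVec_le_of_mem_eigenspan (c := 0) (fun i hi => not_lt.1 hi) hx
    have hGx : 0 < x ⬝ᵥ G *ᵥ x := by simpa using hG.dotProduct_mulVec_pos (by simpa using hx0)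
    rw [restrict_apply, _root_.neg_apply, hq]
    nlinarith
  have hPN : finrank ℝ (hA.eigenspan s) + finrank ℝ (hA.eigenspan sᶜ) = finrank ℝ (n → ℝ) := by
    rw [finrank_eigenspan, finrank_eigenspan, Set.ncard_add_ncard_compl, finrank_pi,
      Nat.card_eq_fintype_card]
  have hAG : (A + δ • G).IsHermitian := hA.add (hG.1.smul (.all _))
  refine ⟨hAG.isUnit_of_radical_eq_bot
    (QuadraticForm.radical_eq_bot_of_posDef_of_negDef hP hN hPN), ?_⟩
  rw [hAG.posIdx_eq_sigPos, QuadraticForm.sigPos_eq_finrank_of_posDef_of_negDef hP hN hPN,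
    hA.posIdx_eq_ncard, finrank_eigenspan]

theorem IsHermitian.exists_posDef_neg_add_smul {A F : Matrix n n ℝ} (hA : A.IsHermitian)
    (hF : F.PosDef) :
    ∃ l₀ < (0 : ℝ), ∀ l ≤ l₀, (-(A + l • F)).PosDef := by
  obtain ⟨C, hC, hCA⟩ := hA.exists_dotProduct_mulVec_le
  obtain ⟨c, hc, hcF⟩ := hF.exists_mul_dotProduct_self_le
  refine ⟨-(2 * C / c), by simp only [neg_lt_zero]; positivity, fun l hl => ?_⟩
  refine PosDef.of_dotProduct_mulVec_pos (hA.add (hF.1.smul (.all _))).neg fun x hx0 => ?_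
  have hxx : 0 < x ⬝ᵥ x := by simpa [star_trivial] using dotProduct_self_star_pos_iff.2 hx0
  have hlF : l * (x ⬝ᵥ F *ᵥ x) ≤ -(2 * C) * (x ⬝ᵥ x) := calc
    l * (x ⬝ᵥ F *ᵥ x) ≤ l * (c * (x ⬝ᵥ x)) :=
      mul_le_mul_of_nonpos_left (hcF x) (hl.trans (by simp only [neg_nonpos]; positivity))
    _ ≤ -(2 * C / c) * (c * (x ⬝ᵥ x)) := by gcongr
    _ = -(2 * C) * (x ⬝ᵥ x) := by field_simp
  simp only [star_trivial, neg_mulVec, dotProduct_neg, add_mulVec, smul_mulVec, dotProduct_add,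
    dotProduct_smul, smul_eq_mul]
  nlinarith [hCA x]

theorem posIdx_fromBlocks₁₁ {A : Matrix m m ℝ} (hA : A.IsHermitian) [Invertible A]
    (B : Matrix m n ℝ) {D : Matrix n n ℝ} (hS : (-(D - Bᵀ * A⁻¹ * B)).PosSemidef) :
    posIdx (fromBlocks A B Bᵀ D) = posIdx A := by
  have hQ : (fromBlocks A B Bᵀ D).IsHermitian := by
    rw [← conjTranspose_eq_transpose_of_trivial] at hS ⊢
    exact (IsHermitian.fromBlocks₁₁ B D hA).2 (by simpa using hS.1.neg)
  set S := D - Bᵀ * A⁻¹ * B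
  let e : ((m → ℝ) × (n → ℝ)) ≃ₗ[ℝ] (m ⊕ n → ℝ) :=
    LinearEquiv.prodComm ℝ _ _ ≪≫ₗ
      (LinearEquiv.refl ℝ _).skewProd (LinearEquiv.refl ℝ _) (-(A⁻¹ * B).mulVecLin) ≪≫ₗ
      LinearEquiv.prodComm ℝ _ _ ≪≫ₗ (LinearEquiv.sumPiEquivProdPi ℝ m n fun _ => ℝ).symm
  have he : ∀ p, e p = Sum.elim (p.1 - (A⁻¹ * B) *ᵥ p.2) p.2 := fun p => by
    ext (i | i) <;> simp [e, sub_eq_add_neg]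
  let f : (A.toQuadraticForm'.prod S.toQuadraticForm').IsometryEquiv
      (fromBlocks A B Bᵀ D).toQuadraticForm' :=
    { e with
      map_app' := fun p => by
        have := schur_complement_eq₁₁ B D (p.1 - (A⁻¹ * B) *ᵥ p.2) p.2 hA
        simp only [star_trivial, conjTranspose_eq_transpose_of_trivial, sub_add_cancel] at this
        change (fromBlocks A B Bᵀ D).toQuadraticForm' (e p) = _
        simp only [he, prod_apply, toQuadraticForm'_apply, dotProduct_mulVec]
        exact this }
  rw [hQ.posIdx_eq_sigPos, hA.posIdx_eq_sigPos, ← QuadraticMap.Equivalent.sigPos_eq ⟨f⟩,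
    QuadraticForm.sigPos_prod_of_nonpos]
  intro y
  have := hS.dotProduct_mulVec_nonneg y
  simp only [star_trivial, neg_mulVec, dotProduct_neg] at this
  rw [toQuadraticForm'_apply]
  linarith

end Matrix

/-- For the symmetric block matrix
`Q_{λ,δ} = [[E₁₁ + δG₁₁, E₁₂ + δG₁₂],[(E₁₂ + δG₁₂)ᵀ, E₂₂ + λF₂₂ + δG₂₂]]` with
`G₁₁ ≻ 0` and `F₂₂ ≻ 0`: (a) there is `ε < 0` such that for `δ ∈ [ε, 0)` the block
`E₁₁ + δG₁₁` is invertible with `μ₊(E₁₁ + δG₁₁) = μ₊(E₁₁)`; and (b) for each such `δ`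
there is `λ_δ < 0` such that for all `λ ≤ λ_δ` the Schur complement is negative definite,
whence `μ₊(Q_{λ,δ}) = μ₊(E₁₁)`. -/
theorem schur_perturbation_inertia {n₁ n₂ : ℕ}
    (E₁₁ G₁₁ : Matrix (Fin n₁) (Fin n₁) ℝ) (hE₁₁ : E₁₁.IsSymm) (hG₁₁ : G₁₁.PosDef)
    (E₁₂ G₁₂ : Matrix (Fin n₁) (Fin n₂) ℝ)
    (E₂₂ F₂₂ G₂₂ : Matrix (Fin n₂) (Fin n₂) ℝ)
    (hE₂₂ : E₂₂.IsSymm) (hG₂₂ : G₂₂.IsSymm) (hF₂₂ : F₂₂.PosDef)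
    (Q : ℝ → ℝ → Matrix (Fin n₁ ⊕ Fin n₂) (Fin n₁ ⊕ Fin n₂) ℝ)
    (hQ : ∀ lam δ : ℝ, Q lam δ =
      Matrix.fromBlocks (E₁₁ + δ • G₁₁) (E₁₂ + δ • G₁₂)
        ((E₁₂ + δ • G₁₂)ᵀ) (E₂₂ + lam • F₂₂ + δ • G₂₂)) :
    ∃ ε : ℝ, ε < 0 ∧ ∀ δ : ℝ, ε ≤ δ → δ < 0 →
      (IsUnit (E₁₁ + δ • G₁₁) ∧ posIdx (E₁₁ + δ • G₁₁) = posIdx E₁₁) ∧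
      ∃ lamδ : ℝ, lamδ < 0 ∧ ∀ lam : ℝ, lam ≤ lamδ →
        (-(E₂₂ + lam • F₂₂ + δ • G₂₂ -
            (E₁₂ + δ • G₁₂)ᵀ * (E₁₁ + δ • G₁₁)⁻¹ * (E₁₂ + δ • G₁₂))).PosDef ∧
        posIdx (Q lam δ) = posIdx E₁₁ := by
  have hE : E₁₁.IsHermitian := isHermitian_iff_isSymm.2 hE₁₁
  obtain ⟨ε, hε, hperturb⟩ := hE.exists_isUnit_and_posIdx_add_smul hG₁₁
  refine ⟨ε, hε, fun δ hεδ hδ => ?_⟩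
  obtain ⟨hunit, hpos⟩ := hperturb δ hεδ hδ
  refine ⟨⟨hunit, hpos⟩, ?_⟩
  set A := E₁₁ + δ • G₁₁
  set B := E₁₂ + δ • G₁₂
  have : Invertible A := hunit.invertible
  have hA : A.IsHermitian := hE.add (hG₁₁.1.smul (.all _))
  have hM : (E₂₂ + δ • G₂₂ - Bᵀ * A⁻¹ * B).IsHermitian :=
    ((isHermitian_iff_isSymm.2 hE₂₂).add ((isHermitian_iff_isSymm.2 hG₂₂).smul (.all _))).sub
      (by simpa using isHermitian_conjTranspose_mul_mul B hA.inv)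
  obtain ⟨lam₀, hlam₀, hneg⟩ := hM.exists_posDef_neg_add_smul hF₂₂
  refine ⟨lam₀, hlam₀, fun lam hlam => ?_⟩
  have hS : (-(E₂₂ + lam • F₂₂ + δ • G₂₂ - Bᵀ * A⁻¹ * B)).PosDef := by
    convert hneg lam hlam using 2
    abel
  exact ⟨hS, by rw [hQ, posIdx_fromBlocks₁₁ hA B hS.posSemidef, hpos]⟩
end
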